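/- arXiv:2407.14436 — 2 statements merged into one kernel-verified Lean document; each statement's English description precedes it below -/
import Mathlib

section
/- (Fake targets equal traps, almost-sure case) For any Z ⊆ Win_2(G, F) \ F, the deceptive almost-sure winning region with Z as traps equals the one with Z as fake targets: DASWin_1(Z, ∅) = DASWin_1(∅, Z). -/
/-! P2 only plays actions whose successor stays in its perceived winning region `win2 (F ∪ Y)`.
The attractor `win2 F` is the least set containing `F` that is closed under both predecessor
operators (for the universal P1 predecessor this uses finiteness: the attractor levels
stabilise), so it absorbs any `Z ⊆ win2 F`: `win2 (F ∪ Z) = win2 F`. As the decoys `Z` are absorbing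
in either role, the two hypergame MDPs have the same transitions. -/

open scoped Classical
noncomputable section

variable {S A : Type*}

/-- Player-2 attractor level sets: `Z 0 = F`, `Z (k+1) = Z k ∪ Pre₁(Z k) ∪ Pre₂(Z k)`,
where `Pre₁` collects P1 states all of whose actions lead into `Z k`, and `Pre₂`
collects P2 states some action of which leads into `Z k`. -/
def lev (isP1 : S → Prop) (T : S → A → S) (F : Set S) : ℕ → Set S
  | 0 => F
  | n + 1 => lev isP1 T F n ∪
      {s | isP1 s ∧ ∀ a, T s a ∈ lev isP1 T F n} ∪
      {s | ¬ isP1 s ∧ ∃ a, T s a ∈ lev isP1 T F n}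

/-- Player-2 winning region (attractor of `F` for player 2). -/
def win2 (isP1 : S → Prop) (T : S → A → S) (F : Set S) : Set S :=
  ⋃ n, lev isP1 T F n

/-- Rank of a state: the minimal attractor level containing it (`⊤` if none). -/
def rank (isP1 : S → Prop) (T : S → A → S) (F : Set S) (s : S) : ℕ∞ :=
  ⨅ (n : ℕ) (_ : s ∈ lev isP1 T F n), (n : ℕ∞)

/-- Transition function of the true game `G_{X,Y}`: states in the decoy set
`D` are absorbing sinks; elsewhere the original transitions apply. -/
def sinkT (T : S → A → S) (D : Set S) (s : S) (a : A) : S :=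
  if s ∈ D then s else T s a

/-- One step of the hypergame MDP for decoy placement `(X, Y)` under P1's
memoryless strategy `π₁`: at P1 states, `π₁` is followed; at P2 (nature)
states, any subjectively rationalizable action (one whose successor stays in
P2's perceived winning region `Win₂(G, F ∪ Y)`) may occur with positive
probability. Decoys `X ∪ Y` are absorbing. -/
def mdpStep (isP1 : S → Prop) (T : S → A → S) (F X Y : Set S) (π₁ : S → A)
    (t t' : S) : Prop :=
  if isP1 t then t' = sinkT T (X ∪ Y) t (π₁ t)
  else ∃ a, T t a ∈ win2 isP1 T (F ∪ Y) ∧ t' = sinkT T (X ∪ Y) t a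

/-- Player 1's stealthy deceptive almost-sure winning region: states from
which P1 has a memoryless strategy such that from every state reachable in
the hypergame MDP, the decoy set `X ∪ Y` remains reachable (the standard
graph-theoretic characterization of almost-sure reachability in finite
MDPs). -/
def daswin (isP1 : S → Prop) (T : S → A → S) (F X Y : Set S) : Set S :=
  {s | ∃ π₁ : S → A,
    ∀ s', Relation.ReflTransGen (mdpStep isP1 T F X Y π₁) s s' →
      ∃ s'', Relation.ReflTransGen (mdpStep isP1 T F X Y π₁) s' s'' ∧
        s'' ∈ X ∪ Y}

section Attractor

variable {isP1 : S → Prop} {T : S → A → S}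

lemma lev_mono (F : Set S) : Monotone (lev isP1 T F) :=
  monotone_nat_of_le_succ fun _ _ hs => Or.inl (Or.inl hs)

lemma lev_subset_lev {F F' : Set S} (h : F ⊆ F') (n : ℕ) :
    lev isP1 T F n ⊆ lev isP1 T F' n := by
  induction n with
  | zero => exact h
  | succ n ih =>
    rintro s ((hs | ⟨hP1, hall⟩) | ⟨hP2, a, ha⟩)
    · exact Or.inl (Or.inl (ih hs))
    · exact Or.inl (Or.inr ⟨hP1, fun a => ih (hall a)⟩)
    · exact Or.inr ⟨hP2, a, ih ha⟩

lemma win2_mono {F F' : Set S} (h : F ⊆ F') : win2 isP1 T F ⊆ win2 isP1 T F' :=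
  Set.iUnion_mono (lev_subset_lev h)

lemma win2_subset_of_closed {F W : Set S} (hF : F ⊆ W)
    (hPre₁ : ∀ s, isP1 s → (∀ a, T s a ∈ W) → s ∈ W)
    (hPre₂ : ∀ s a, ¬ isP1 s → T s a ∈ W → s ∈ W) :
    win2 isP1 T F ⊆ W := by
  refine Set.iUnion_subset fun n => ?_
  induction n with
  | zero => exact hF
  | succ n ih =>
    rintro s ((hs | ⟨hP1, hall⟩) | ⟨hP2, a, ha⟩)
    · exact ih hs
    · exact hPre₁ s hP1 fun a => ih (hall a)
    · exact hPre₂ s a hP2 (ih ha)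

lemma exists_win2_eq_lev [Finite S] (F : Set S) : ∃ N, win2 isP1 T F = lev isP1 T F N := by
  obtain ⟨N, hN⟩ := WellFoundedGT.monotone_chain_condition ⟨lev isP1 T F, lev_mono F⟩
  refine ⟨N, (Set.iUnion_subset fun n => ?_).antisymm (Set.subset_iUnion _ N)⟩
  calc lev isP1 T F n ⊆ lev isP1 T F (max N n) := lev_mono F (le_max_right N n)
    _ = lev isP1 T F N := (hN _ (le_max_left N n)).symm

lemma mem_win2_of_isP1 [Finite S] {F : Set S} {s : S} (hP1 : isP1 s)
    (hall : ∀ a, T s a ∈ win2 isP1 T F) : s ∈ win2 isP1 T F := by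
  obtain ⟨N, hN⟩ := exists_win2_eq_lev (isP1 := isP1) (T := T) F
  exact Set.mem_iUnion.2 ⟨N + 1, Or.inl (Or.inr ⟨hP1, fun a => hN ▸ hall a⟩)⟩

lemma mem_win2_of_not_isP1 {F : Set S} {s : S} {a : A} (hP2 : ¬ isP1 s)
    (ha : T s a ∈ win2 isP1 T F) : s ∈ win2 isP1 T F := by
  obtain ⟨n, hn⟩ := Set.mem_iUnion.1 ha
  exact Set.mem_iUnion.2 ⟨n + 1, Or.inr ⟨hP2, a, hn⟩⟩

lemma win2_union_of_subset_win2 [Finite S] {F Z : Set S} (hZ : Z ⊆ win2 isP1 T F) :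
    win2 isP1 T (F ∪ Z) = win2 isP1 T F :=
  (win2_subset_of_closed (Set.union_subset (Set.subset_iUnion (lev isP1 T F) 0) hZ)
    (fun _ => mem_win2_of_isP1) (fun _ _ => mem_win2_of_not_isP1)).antisymm
    (win2_mono Set.subset_union_left)

end Attractor

lemma mdpStep_traps_eq_fakes {isP1 : S → Prop} {T : S → A → S} {F Z : Set S}
    (hwin : win2 isP1 T (F ∪ Z) = win2 isP1 T F) :
    mdpStep isP1 T F Z ∅ = mdpStep isP1 T F ∅ Z := by
  funext π₁ t t'
  simp only [mdpStep, Set.union_empty, Set.empty_union, hwin]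

/-- under the almost-sure winning criterion, placing `Z` as
traps yields exactly the same deceptive winning region as placing `Z` as
fake targets. -/
theorem daswin_traps_eq_fakes [Fintype S]
    (isP1 : S → Prop) (T : S → A → S) (F Z : Set S)
    (hZ : Z ⊆ win2 isP1 T F \ F) :
    daswin isP1 T F Z ∅ = daswin isP1 T F ∅ Z := by
  have hstep : mdpStep isP1 T F Z ∅ = mdpStep isP1 T F ∅ Z :=
    mdpStep_traps_eq_fakes (win2_union_of_subset_win2 fun _ hz => (hZ hz).1)
  simp only [daswin, hstep, Set.union_empty, Set.empty_union]
end
end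

section
/- (Rank strictly decreases when P2 can reach a fake target) Let Y ⊆ Win_2(G, F) \ F. If from a state s ∈ Win_2(G, F) \ F player 2 has a strategy in G forcing a visit to Y within rank_F(s) − 1 steps, then the rank of s with respect to the target F ∪ Y is strictly smaller than rank_F(s). -/
open scoped Classical
noncomputable section

variable {S A : Type*}

theorem lev_mono_target (isP1 : S → Prop) (T : S → A → S) {F G : Set S} (h : F ⊆ G) :
    ∀ n, lev isP1 T F n ⊆ lev isP1 T G n
  | 0 => h
  | n + 1 => by
    have ih := lev_mono_target isP1 T h n
    rintro s ((hs | ⟨hP1, hall⟩) | ⟨hP2, a, ha⟩)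
    · exact Or.inl (Or.inl (ih hs))
    · exact Or.inl (Or.inr ⟨hP1, fun a => ih (hall a)⟩)
    · exact Or.inr ⟨hP2, a, ih ha⟩

theorem rank_le_of_mem_lev (isP1 : S → Prop) (T : S → A → S) {F : Set S} {s : S} {n : ℕ}
    (h : s ∈ lev isP1 T F n) : rank isP1 T F s ≤ n :=
  iInf₂_le n h

theorem rank_strictly_decreases_general
    (isP1 : S → Prop) (T : S → A → S) (F Y : Set S)
    (s : S)
    (k : ℕ) (hk : s ∈ lev isP1 T Y k) (hlt : (k : ℕ∞) < rank isP1 T F s) :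
    rank isP1 T (F ∪ Y) s < rank isP1 T F s :=
  calc rank isP1 T (F ∪ Y) s ≤ k :=
        rank_le_of_mem_lev isP1 T (lev_mono_target isP1 T Set.subset_union_right k hk)
    _ < rank isP1 T F s := hlt

/-- if from `s ∈ Win₂(G,F) \ F` player 2 can force a visit to
the fake targets `Y` within `rank_F(s) − 1` steps (i.e. `s` is in the `k`-th
attractor level of `Y` for some `k < rank_F(s)`), then the rank of `s`
with respect to `F ∪ Y` is strictly smaller than its rank with respect
to `F`. -/
theorem rank_strictly_decreases [Fintype S]
    (isP1 : S → Prop) (T : S → A → S) (F Y : Set S)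
    (hY : Y ⊆ win2 isP1 T F \ F)
    (s : S) (hs : s ∈ win2 isP1 T F \ F)
    (k : ℕ) (hk : s ∈ lev isP1 T Y k) (hlt : (k : ℕ∞) < rank isP1 T F s) :
    rank isP1 T (F ∪ Y) s < rank isP1 T F s :=
  rank_strictly_decreases_general isP1 T F Y s k hk hlt
end
end
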